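/- Let ρ > 0, n ∈ ℕ, p(t) = (log^n t)^{1/ρ}, and for an integer k ≥ exp^n(2) let n_k be any integer with n_k ≥ (1/2) ρ k (log k)⋯(log^n k). Then for real l with exp^n(2) ≤ k < l, (p(l)/p(k))^{n_k} ≥ exp(c · min{k, l − k}), where c = (log 2)^{n+1}/2. -/

import Mathlib

open Real Finset

lemma lemA (k l : ℝ) (hk : 0 < k) (hkl : k ≤ l) :
    Real.log 2 * min k (l - k) ≤ k * Real.log (l / k) := by
  rcases le_total (2 * k) l with h | h
  · rw [min_eq_left (by linarith)]
    have h2 : (2 : ℝ) ≤ l / k := (le_div_iff₀ hk).2 (by linarith)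
    have := Real.log_le_log (by norm_num) h2
    nlinarith
  · rw [min_eq_right (by linarith)]
    set u : ℝ := (l - k) / k with hu
    have hu0 : 0 ≤ u := div_nonneg (by linarith) hk.le
    have hu1 : u ≤ 1 := (div_le_one hk).2 (by linarith)
    have hconv := convexOn_exp.2 (Set.mem_univ (0:ℝ)) (Set.mem_univ (Real.log 2))
        (show (0:ℝ) ≤ 1 - u by linarith) hu0 (by ring)
    simp only [smul_eq_mul, mul_zero, zero_add, Real.exp_zero, Real.exp_log two_pos] at hconv
    have hexp : Real.exp (u * Real.log 2) ≤ 1 + u := by nlinarith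
    have hlog : u * Real.log 2 ≤ Real.log (1 + u) := by
      have := Real.log_le_log (Real.exp_pos _) hexp
      rwa [Real.log_exp] at this
    have huk : u * k = l - k := by rw [hu]; field_simp
    have hlk : l / k = 1 + u := by rw [hu]; field_simp; ring
    rw [hlk]
    calc Real.log 2 * (l - k) = k * (u * Real.log 2) := by rw [← huk]; ring
    _ ≤ k * Real.log (1 + u) := by nlinarith

lemma two_le_iter (n : ℕ) : (2:ℝ) ≤ Real.exp^[n] 2 := by
  induction n with
  | zero => simp
  | succ m ih =>
    rw [Function.iterate_succ_apply']
    have := Real.add_one_le_exp (Real.exp^[m] 2)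
    linarith

lemma iter_mono_n : Monotone (fun m => Real.exp^[m] (2:ℝ)) := by
  apply monotone_nat_of_le_succ
  intro m
  rw [Function.iterate_succ_apply']
  have := Real.add_one_le_exp (Real.exp^[m] (2:ℝ))
  linarith

lemma logIter (n : ℕ) : ∀ k l : ℝ, Real.exp^[n] 2 ≤ k → k ≤ l →
    2 ≤ Real.log^[n] k ∧ Real.log^[n] k ≤ Real.log^[n] l := by
  induction n with
  | zero => intro k l hk hkl; exact ⟨hk, hkl⟩
  | succ n ih =>
    intro k l hk hkl
    rw [Function.iterate_succ_apply'] at hk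
    have hek : Real.exp (Real.exp^[n] 2) ≤ k := hk
    have hk0 : 0 < k := lt_of_lt_of_le (Real.exp_pos _) hek
    have hlk : Real.exp^[n] 2 ≤ Real.log k := by
      rw [← Real.log_exp (Real.exp^[n] 2)]; exact Real.log_le_log (Real.exp_pos _) hek
    have hll : Real.log k ≤ Real.log l := Real.log_le_log hk0 hkl
    have := ih (Real.log k) (Real.log l) hlk hll
    simpa only [Function.iterate_succ_apply] using this

lemma factor_two (n i : ℕ) (hi : i ≤ n) (k : ℝ) (hk : Real.exp^[n] 2 ≤ k) :
    2 ≤ Real.log^[i] k :=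
  (logIter i k k (le_trans (iter_mono_n hi) hk) le_rfl).1

lemma prod_two_le (n : ℕ) (k : ℝ) (hk : Real.exp^[n] 2 ≤ k) :
    (0:ℝ) ≤ ∏ i ∈ Icc 1 n, Real.log^[i] k := by
  apply Finset.prod_nonneg
  intro i hi
  have := factor_two n i (Finset.mem_Icc.1 hi).2 k hk
  linarith

lemma prodstep (n : ℕ) (k : ℝ) :
    ∏ i ∈ Icc 1 (n + 1), Real.log^[i] k
      = Real.log k * ∏ i ∈ Icc 1 n, Real.log^[i] (Real.log k) := by
  have h1 : ∏ i ∈ Icc 1 n, Real.log^[i] (Real.log k)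
      = ∏ i ∈ Icc 2 (n + 1), Real.log^[i] k := by
    rw [show Icc 2 (n+1) = (Icc 1 n).map (addRightEmbedding 1) from
      (Finset.map_add_right_Icc 1 n 1).symm, Finset.prod_map]
    refine Finset.prod_congr rfl fun i _ => ?_
    simp [addRightEmbedding, Function.iterate_succ_apply]
  rw [h1, ← Finset.insert_Icc_add_one_left_eq_Icc (by omega : 1 ≤ n + 1),
    Finset.prod_insert (by simp)]
  simp

lemma key (n : ℕ) : ∀ k l : ℝ, Real.exp^[n] 2 ≤ k → k ≤ l →
    (Real.log 2) ^ (n + 1) * min k (l - k)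
      ≤ (k * ∏ i ∈ Icc 1 n, Real.log^[i] k)
          * Real.log (Real.log^[n] l / Real.log^[n] k) := by
  induction n with
  | zero =>
    intro k l hk hkl
    have hk2 : (2:ℝ) ≤ k := by simpa using hk
    simpa using lemA k l (by linarith) hkl
  | succ n ih =>
    intro k l hk hkl
    have hk' := hk
    rw [Function.iterate_succ_apply'] at hk'
    have hek : Real.exp (Real.exp^[n] 2) ≤ k := hk'
    have hk0 : 0 < k := lt_of_lt_of_le (Real.exp_pos _) hek
    have hlk : Real.exp^[n] 2 ≤ Real.log k := by
      rw [← Real.log_exp (Real.exp^[n] 2)]; exact Real.log_le_log (Real.exp_pos _) hek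
    have hll : Real.log k ≤ Real.log l := Real.log_le_log hk0 hkl
    have IH := ih (Real.log k) (Real.log l) hlk hll
    have hlog2pos : (0:ℝ) < Real.log 2 := Real.log_pos (by norm_num)
    have hlog2le : Real.log 2 ≤ 1 := by
      have := Real.log_le_sub_one_of_pos (show (0:ℝ) < 2 by norm_num); linarith
    have hminle : min k (l - k) ≤ k := min_le_left _ _
    have hmin0 : 0 ≤ min k (l - k) := le_min hk0.le (by linarith)
    have hA : Real.log 2 * min k (l - k) ≤ k * (Real.log l - Real.log k) := by
      have := lemA k l hk0 hkl
      rwa [Real.log_div (by linarith) (by linarith)] at this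
    have h2lk : 2 ≤ Real.log k := le_trans (two_le_iter n) hlk
    have hB : Real.log 2 * min k (l - k) ≤ k * Real.log k := by
      nlinarith [mul_le_mul (show Real.log 2 ≤ Real.log k by linarith) hminle hmin0
        (by linarith : (0:ℝ) ≤ Real.log k)]
    have hABmin : Real.log 2 * min k (l - k) ≤ k * min (Real.log k) (Real.log l - Real.log k) := by
      rcases min_cases (Real.log k) (Real.log l - Real.log k) with ⟨h, _⟩ | ⟨h, _⟩ <;>
        rw [h] <;> [exact hB; exact hA]
    rw [← Function.iterate_succ_apply Real.log n k, ← Function.iterate_succ_apply Real.log n l]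
      at IH
    rw [prodstep n k]
    calc Real.log 2 ^ (n + 1 + 1) * min k (l - k)
        = Real.log 2 ^ (n + 1) * (Real.log 2 * min k (l - k)) := by ring
      _ ≤ Real.log 2 ^ (n + 1) * (k * min (Real.log k) (Real.log l - Real.log k)) :=
          mul_le_mul_of_nonneg_left hABmin (by positivity)
      _ = k * (Real.log 2 ^ (n + 1) * min (Real.log k) (Real.log l - Real.log k)) := by ring
      _ ≤ k * ((Real.log k * ∏ i ∈ Icc 1 n, Real.log^[i] (Real.log k))
            * Real.log (Real.log^[n+1] l / Real.log^[n+1] k)) :=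
          mul_le_mul_of_nonneg_left IH hk0.le
      _ = k * (Real.log k * ∏ i ∈ Icc 1 n, Real.log^[i] (Real.log k))
            * Real.log (Real.log^[n+1] l / Real.log^[n+1] k) := by ring

/-- For `p(t) = (log^n t)^{1/ρ}`, an integer `k ≥ exp^n(2)`, an integer
`n_k ≥ (1/2) ρ k (log k)⋯(log^n k)`, and real `l > k`:
`(p(l)/p(k))^{n_k} ≥ exp(c min{k, l−k})` with `c = (log 2)^{n+1}/2`. -/
theorem stmt14 (ρ : ℝ) (hρ : 0 < ρ) (n : ℕ)
    (p : ℝ → ℝ) (hp : ∀ t, p t = (Real.log^[n] t) ^ (1 / ρ))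
    (k : ℕ) (hk : Real.exp^[n] 2 ≤ (k : ℝ))
    (nk : ℕ) (hnk : (1 / 2) * ρ * k * ∏ i ∈ Finset.Icc 1 n, Real.log^[i] (k : ℝ) ≤ (nk : ℝ))
    (l : ℝ) (hkl : (k : ℝ) < l) :
    Real.exp ((Real.log 2) ^ (n + 1) / 2 * min (k : ℝ) (l - k)) ≤ (p l / p k) ^ nk := by
  set P : ℝ := ∏ i ∈ Finset.Icc 1 n, Real.log^[i] (k : ℝ) with hP
  have hkey := key n k l hk hkl.le
  have hlogs := logIter n (k : ℝ) l hk hkl.le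
  have hxk : (0:ℝ) < Real.log^[n] (k : ℝ) := by linarith [hlogs.1]
  have hxl : (0:ℝ) < Real.log^[n] l := by linarith [hlogs.1, hlogs.2]
  set L : ℝ := Real.log (Real.log^[n] l / Real.log^[n] (k : ℝ)) with hL
  have hL0 : 0 ≤ L := Real.log_nonneg ((one_le_div hxk).2 hlogs.2)
  have hPnn : (0:ℝ) ≤ P := prod_two_le n (k : ℝ) hk
  rw [hp l, hp k, ← Real.div_rpow hxl.le hxk.le]
  have hxpos : (0:ℝ) < Real.log^[n] l / Real.log^[n] (k : ℝ) := div_pos hxl hxk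
  rw [← Real.rpow_natCast ((Real.log^[n] l / Real.log^[n] (k : ℝ)) ^ (1/ρ)) nk,
    ← Real.rpow_mul hxpos.le, Real.rpow_def_of_pos hxpos]
  apply Real.exp_le_exp.2
  have h1 : (1/2) * ((k:ℝ) * P) ≤ (nk : ℝ) / ρ := by
    rw [le_div_iff₀ hρ]; nlinarith [hnk]
  calc (Real.log 2) ^ (n + 1) / 2 * min (k : ℝ) (l - k)
      = (1/2) * ((Real.log 2) ^ (n + 1) * min (k : ℝ) (l - k)) := by ring
    _ ≤ (1/2) * (((k:ℝ) * P) * L) := by linarith [hkey]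
    _ = ((1/2) * ((k:ℝ) * P)) * L := by ring
    _ ≤ ((nk : ℝ) / ρ) * L := mul_le_mul_of_nonneg_right h1 hL0
    _ = L * (1 / ρ * (nk : ℕ)) := by ring
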